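/- The Pareto front of a compact set A ⊆ ℝ^p coincides with the Pareto front of its closure; more precisely, if A is compact then every Pareto optimal point of A is a Pareto optimal point of cl(A) = A, and any nonempty set A whose Pareto front equals the Pareto front of its closure has the property that every non-Pareto-optimal admissible point is dominated by a Pareto optimal point, provided A is compact. -/
import Mathlib

/-- If `x ≤ y` componentwise and `x ≠ y`, the coordinate sum of `x` is strictly
smaller than that of `y`. -/
lemma sum_lt_of_le_ne {p : ℕ} {x y : Fin p → ℝ} (hle : ∀ i, x i ≤ y i)
    (hne : x ≠ y) : ∑ i, x i < ∑ i, y i := by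
  obtain ⟨j, hj⟩ := Function.ne_iff.mp hne
  exact Finset.sum_lt_sum (fun i _ => hle i)
    ⟨j, Finset.mem_univ j, lt_of_le_of_ne (hle j) hj⟩

/-- For compact `A ⊆ ℝ^p`, every Pareto optimal point of `A` is Pareto optimal for
`cl(A) = A`; and if moreover `A` is nonempty and its Pareto front coincides with
that of its closure, then every non-Pareto-optimal point of `A` is dominated by a
Pareto optimal point of `A`. -/
theorem stmt_8 {p : ℕ} (A : Set (Fin p → ℝ)) (hA : IsCompact A)
    (Par : Set (Fin p → ℝ) → (Fin p → ℝ) → Prop)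
    (hPar : ∀ S a, Par S a ↔ a ∈ S ∧ ¬ ∃ a' ∈ S, (∀ i, a' i ≤ a i) ∧ a' ≠ a) :
    (∀ a, Par A a → Par (closure A) a) ∧
    (A.Nonempty → {a | Par A a} = {a | Par (closure A) a} →
      ∀ a ∈ A, ¬ Par A a → ∃ b, Par A b ∧ (∀ i, b i ≤ a i) ∧ b ≠ a) := by
  have hcl : closure A = A := hA.isClosed.closure_eq
  constructor
  · intro a h; rwa [hcl]
  · intro _ _ a ha hnpar
    -- the set of points of A dominating a (weakly)
    set B : Set (Fin p → ℝ) := A ∩ ⋂ i, {b | b i ≤ a i} with hB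
    have hBc : IsCompact B :=
      hA.inter_right (isClosed_iInter fun i =>
        isClosed_le (continuous_apply i) continuous_const)
    have haB : a ∈ B := ⟨ha, Set.mem_iInter.mpr fun i => le_refl (a i)⟩
    have hcont : ContinuousOn (fun b : Fin p → ℝ => ∑ i, b i) B :=
      (continuous_finset_sum _ fun i _ => continuous_apply i).continuousOn
    obtain ⟨b, hbB, hbmin⟩ := hBc.exists_isMinOn ⟨a, haB⟩ hcont
    have hbA : b ∈ A := hbB.1
    have hble : ∀ i, b i ≤ a i := fun i => Set.mem_iInter.mp hbB.2 i
    -- b is Pareto optimal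
    have hParb : Par A b := by
      rw [hPar]
      refine ⟨hbA, ?_⟩
      rintro ⟨a', ha'A, ha'le, ha'ne⟩
      have ha'B : a' ∈ B :=
        ⟨ha'A, Set.mem_iInter.mpr fun i => (ha'le i).trans (hble i)⟩
      exact absurd (hbmin ha'B) (not_le.mpr (sum_lt_of_le_ne ha'le ha'ne))
    -- b ≠ a since a is not Pareto optimal
    have : ∃ a' ∈ A, (∀ i, a' i ≤ a i) ∧ a' ≠ a := by
      by_contra hcon
      exact hnpar ((hPar A a).mpr ⟨ha, hcon⟩)
    obtain ⟨a', ha'A, ha'le, ha'ne⟩ := this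
    have ha'B : a' ∈ B := ⟨ha'A, Set.mem_iInter.mpr ha'le⟩
    have hlt : ∑ i, b i < ∑ i, a i :=
      lt_of_le_of_lt (hbmin ha'B) (sum_lt_of_le_ne ha'le ha'ne)
    exact ⟨b, hParb, hble, fun h => absurd (congrArg (fun x => ∑ i, x i) h) (ne_of_lt hlt)⟩
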